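/- During the execution of the LLL algorithm, A = maxᵢ ‖b̂ᵢ‖² is non-increasing: after a swap of b_{k-1} and b_k, the new maximum of the squared Gram-Schmidt norms is at most the old maximum. -/

import Mathlib

/-- Gram-Schmidt orthogonalization of a family of vectors in ℂⁿ. -/
noncomputable def gso {n : ℕ} (b : Fin n → EuclideanSpace ℂ (Fin n)) :
    Fin n → EuclideanSpace ℂ (Fin n) :=
  @InnerProductSpace.gramSchmidt ℂ _ _ _ _ (Fin n) _ _ (inferInstance : WellFoundedLT (Fin n)) b

/-- Gram-Schmidt coefficient μ_{i,j} = ⟨bᵢ, b̂ⱼ⟩ / ‖b̂ⱼ‖². -/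
noncomputable def mu {n : ℕ} (b : Fin n → EuclideanSpace ℂ (Fin n)) (i j : Fin n) : ℂ :=
  (inner ℂ (gso b j) (b i) : ℂ) / ((‖gso b j‖ ^ 2 : ℝ) : ℂ)

/-! The Gram-Schmidt vector `b̂ₘ` is the shortest vector of `bₘ + span (b '' Iio m)`. Swapping
the adjacent vectors `bⱼ, bᵢ` (`j ⋖ i`, `b' = b ∘ swap j i`) changes none of the spans
`span (b '' Iio m)` with `m ≠ i`, so `b̂'ₘ` is no longer than `b̂ₘ` for `m ≠ j, i`; `b̂'ᵢ` is no
longer than `b̂ⱼ`, because `bⱼ - b̂ⱼ ∈ span (b '' Iio j) ⊆ span (b' '' Iio i)`; and `b̂'ⱼ` is no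
longer than `b̂ᵢ + μᵢⱼ b̂ⱼ`, whose squared norm is `< δ ‖b̂ⱼ‖² ≤ ‖b̂ⱼ‖²` by the swap condition. -/

open InnerProductSpace Set Submodule

theorem Equiv.swap_image_eq_self_of_mem_iff {α : Type*} [DecidableEq α] {s : Set α} {a b : α}
    (h : a ∈ s ↔ b ∈ s) : Equiv.swap a b '' s = s := by
  ext x
  rw [Equiv.image_eq_preimage_symm, Equiv.symm_swap, mem_preimage, Equiv.swap_apply_def]
  split_ifs with hxa hxb <;> simp_all

theorem CovBy.swap_image_Iio_of_ne {ι : Type*} [LinearOrder ι] [DecidableEq ι] {j i m : ι}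
    (hji : j ⋖ i) (hm : m ≠ i) : Equiv.swap j i '' Iio m = Iio m := by
  refine Equiv.swap_image_eq_self_of_mem_iff ?_
  simp only [mem_Iio]
  constructor
  · intro hjm
    exact lt_of_le_of_ne (hji.ge_of_gt hjm) hm.symm
  · exact hji.lt.trans

theorem image_comp_swap_Iio_of_covBy {ι α : Type*} [LinearOrder ι] [DecidableEq ι] (f : ι → α)
    {j i m : ι} (hji : j ⋖ i) (hm : m ≠ i) : (f ∘ Equiv.swap j i) '' Iio m = f '' Iio m := by
  rw [image_comp, hji.swap_image_Iio_of_ne hm]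

section GramSchmidt

variable {𝕜 E ι : Type*} [RCLike 𝕜] [NormedAddCommGroup E] [InnerProductSpace 𝕜 E]
  [LinearOrder ι] [LocallyFiniteOrderBot ι] [WellFoundedLT ι]

theorem sum_starProjection_gramSchmidt_mem_span (f : ι → E) (m : ι) (x : E) :
    ∑ t ∈ Finset.Iio m, (𝕜 ∙ gramSchmidt 𝕜 f t).starProjection x ∈ span 𝕜 (f '' Iio m) := by
  rw [← span_gramSchmidt_Iio]
  refine sum_mem fun t ht => span_mono ?_ (coe_mem _)
  exact singleton_subset_iff.2 (mem_image_of_mem _ (Finset.mem_Iio.1 ht))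

theorem sub_gramSchmidt_mem_span (f : ι → E) (m : ι) :
    f m - gramSchmidt 𝕜 f m ∈ span 𝕜 (f '' Iio m) := by
  rw [gramSchmidt_def, sub_sub_cancel]
  exact sum_starProjection_gramSchmidt_mem_span f m (f m)

theorem gramSchmidt_mem_orthogonal_span (f : ι → E) (m : ι) :
    gramSchmidt 𝕜 f m ∈ (span 𝕜 (f '' Iio m))ᗮ := by
  rw [← span_gramSchmidt_Iio]
  refine (isOrtho_span.2 ?_).le (mem_span_singleton_self _)
  rintro _ rfl _ ⟨t, ht, rfl⟩
  exact gramSchmidt_orthogonal 𝕜 f (ne_of_lt ht).symm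

theorem norm_gramSchmidt_le_of_sub_mem_span (f : ι → E) (m : ι) {v : E}
    (hv : f m - v ∈ span 𝕜 (f '' Iio m)) : ‖gramSchmidt 𝕜 f m‖ ≤ ‖v‖ := by
  set g := gramSchmidt 𝕜 f m
  have hvg : v - g ∈ span 𝕜 (f '' Iio m) := by
    simpa using sub_mem (sub_gramSchmidt_mem_span f m) hv
  have hpyth := norm_add_sq_eq_norm_sq_add_norm_sq_of_inner_eq_zero g (v - g)
    (inner_left_of_mem_orthogonal hvg (gramSchmidt_mem_orthogonal_span f m))
  rw [add_sub_cancel] at hpyth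
  nlinarith [norm_nonneg v, norm_nonneg g, mul_self_nonneg ‖v - g‖]

theorem sub_gramSchmidt_add_starProjection_mem_span (f : ι → E) {j i : ι} (hji : j ⋖ i) :
    f i - (gramSchmidt 𝕜 f i + (𝕜 ∙ gramSchmidt 𝕜 f j).starProjection (f i)) ∈
      span 𝕜 (f '' Iio j) := by
  classical
  have hIio : Finset.Iio i = insert j (Finset.Iio j) := by
    rw [Finset.Iio_insert, ← Finset.coe_inj, Finset.coe_Iio, Finset.coe_Iic, hji.Iio_eq]
  rw [gramSchmidt_def 𝕜 f i, hIio, Finset.sum_insert Finset.notMem_Iio_self]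
  convert sum_starProjection_gramSchmidt_mem_span f j (f i) using 1
  abel

variable [DecidableEq ι] (f : ι → E) {j i : ι}

theorem norm_gramSchmidt_comp_swap_le_of_ne (hji : j ⋖ i) {m : ι} (hmj : m ≠ j) (hmi : m ≠ i) :
    ‖gramSchmidt 𝕜 (f ∘ Equiv.swap j i) m‖ ≤ ‖gramSchmidt 𝕜 f m‖ := by
  refine norm_gramSchmidt_le_of_sub_mem_span _ m ?_
  rw [image_comp_swap_Iio_of_covBy f hji hmi, Function.comp_apply,
    Equiv.swap_apply_of_ne_of_ne hmj hmi]
  exact sub_gramSchmidt_mem_span f m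

theorem norm_gramSchmidt_comp_swap_left_le (hji : j ⋖ i) :
    ‖gramSchmidt 𝕜 (f ∘ Equiv.swap j i) j‖ ≤
      ‖gramSchmidt 𝕜 f i + (𝕜 ∙ gramSchmidt 𝕜 f j).starProjection (f i)‖ := by
  refine norm_gramSchmidt_le_of_sub_mem_span _ j ?_
  rw [image_comp_swap_Iio_of_covBy f hji hji.lt.ne, Function.comp_apply, Equiv.swap_apply_left]
  exact sub_gramSchmidt_add_starProjection_mem_span f hji

theorem norm_gramSchmidt_comp_swap_right_le (hji : j ⋖ i) :
    ‖gramSchmidt 𝕜 (f ∘ Equiv.swap j i) i‖ ≤ ‖gramSchmidt 𝕜 f j‖ := by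
  refine norm_gramSchmidt_le_of_sub_mem_span _ i ?_
  rw [Function.comp_apply, Equiv.swap_apply_right]
  refine span_mono ?_ (sub_gramSchmidt_mem_span f j)
  rw [← image_comp_swap_Iio_of_covBy f hji hji.lt.ne]
  exact image_mono (Iio_subset_Iio hji.le)

end GramSchmidt

theorem stmt11_general (n : ℕ) (hn : 0 < n) (δ : ℝ) (hδ2 : δ ≤ 1)
    (b : Fin n → EuclideanSpace ℂ (Fin n))
    (j i : Fin n) (hij : j.val + 1 = i.val)
    (hfail : ‖gso b i + mu b i j • gso b j‖^2 < δ * ‖gso b j‖^2) :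
    Finset.sup' Finset.univ ⟨⟨0, hn⟩, Finset.mem_univ _⟩
      (fun m => ‖gso (b ∘ Equiv.swap j i) m‖^2) ≤
    Finset.sup' Finset.univ ⟨⟨0, hn⟩, Finset.mem_univ _⟩ (fun m => ‖gso b m‖^2) := by
  have hji : j ⋖ i := Fin.covBy_iff.2 (Nat.covBy_iff_add_one_eq.2 hij)
  have hle_sup (k : Fin n) : ‖gso b k‖ ^ 2 ≤
      Finset.sup' Finset.univ ⟨⟨0, hn⟩, Finset.mem_univ _⟩ (fun m => ‖gso b m‖^2) :=
    Finset.le_sup' (fun m => ‖gso b m‖ ^ 2) (Finset.mem_univ k)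
  refine Finset.sup'_le _ _ fun m _ => ?_
  obtain rfl | hmj := eq_or_ne m j
  · have hswap : ‖gso (b ∘ Equiv.swap m i) m‖ ≤ ‖gso b i + mu b i m • gso b m‖ := by
      have := norm_gramSchmidt_comp_swap_left_le (𝕜 := ℂ) b hji
      rwa [starProjection_singleton] at this
    calc ‖gso (b ∘ Equiv.swap m i) m‖ ^ 2 ≤ ‖gso b i + mu b i m • gso b m‖ ^ 2 := by gcongr
      _ ≤ δ * ‖gso b m‖ ^ 2 := hfail.le
      _ ≤ ‖gso b m‖ ^ 2 := mul_le_of_le_one_left (by positivity) hδ2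
      _ ≤ _ := hle_sup m
  obtain rfl | hmi := eq_or_ne m i
  · exact (pow_le_pow_left₀ (norm_nonneg _) (norm_gramSchmidt_comp_swap_right_le b hji) 2).trans
      (hle_sup j)
  · exact (pow_le_pow_left₀ (norm_nonneg _)
      (norm_gramSchmidt_comp_swap_le_of_ne b hji hmj hmi) 2).trans (hle_sup m)

theorem stmt11 (n : ℕ) (hn : 0 < n) (δ : ℝ) (hδ2 : δ ≤ 1)
    (b : Fin n → EuclideanSpace ℂ (Fin n)) (hb : LinearIndependent ℂ b)
    (j i : Fin n) (hij : j.val + 1 = i.val)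
    (hfail : ‖gso b i + mu b i j • gso b j‖^2 < δ * ‖gso b j‖^2) :
    Finset.sup' Finset.univ ⟨⟨0, hn⟩, Finset.mem_univ _⟩
      (fun m => ‖gso (b ∘ Equiv.swap j i) m‖^2) ≤
    Finset.sup' Finset.univ ⟨⟨0, hn⟩, Finset.mem_univ _⟩ (fun m => ‖gso b m‖^2) :=
  stmt11_general n hn δ hδ2 b j i hij hfail
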